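/- arXiv:math/0601610 — 3 statements merged into one kernel-verified Lean document; each statement's English description precedes it below -/
import Mathlib

section
/- Let R = ⊕_{i∈ℕ} R_i be a homogeneous Noetherian graded ring with irrelevant ideal R_+, and let M = ⊕_{i∈ℤ} M_i be a ℤ-graded R-module. Let K = (0 :_M R_+) = {m ∈ M : R_+ m = 0}, a graded submodule of M with graded components K_n = K ∩ M_n. If K is tame (there exists n_0 such that either K_n = 0 for all n ≤ n_0 or K_n ≠ 0 for all n ≤ n_0), then M is tame (there exists n_1 such that either M_n = 0 for all n ≤ n_1 or M_n ≠ 0 for all n ≤ n_1). -/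
universe u

lemma irrelevant_le_span {R₀ R : Type u} [CommRing R₀] [CommRing R] [Algebra R₀ R]
    (𝒜 : ℕ → Submodule R₀ R) [GradedAlgebra 𝒜]
    (hhom : ∀ n : ℕ, 𝒜 (n + 1) = 𝒜 1 * 𝒜 n) :
    ((HomogeneousIdeal.irrelevant 𝒜).toIdeal : Ideal R) ≤ Ideal.span (𝒜 1 : Set R) := by
  intro r hr
  classical
  have hr' : r ∈ HomogeneousIdeal.irrelevant 𝒜 := hr
  have hr0 : (DirectSum.decompose 𝒜 r 0 : R) = 0 := by
    rw [HomogeneousIdeal.mem_irrelevant_iff] at hr'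
    simpa [GradedRing.proj_apply] using hr'
  have := DirectSum.sum_support_decompose 𝒜 r
  rw [← this]
  apply Submodule.sum_mem
  intro i hi
  rcases i with _ | k
  · rw [hr0]; exact Submodule.zero_mem _
  · have hmem : (DirectSum.decompose 𝒜 r (k + 1) : R) ∈ 𝒜 1 * 𝒜 k := by
      rw [← hhom k]; exact SetLike.coe_mem _
    have hle : (𝒜 1 * 𝒜 k : Submodule R₀ R) ≤
        (Ideal.span (𝒜 1 : Set R)).restrictScalars R₀ := by
      rw [Submodule.mul_le]
      intro a ha b hb
      have : a ∈ Ideal.span (𝒜 1 : Set R) := Ideal.subset_span ha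
      simpa [mul_comm] using Ideal.mul_mem_left _ b this
    exact hle hmem

/-- **Lemma 4.2(i).** Let `R = ⊕_{i∈ℕ} R_i` be a homogeneous Noetherian graded ring with
irrelevant ideal `R₊` and `M = ⊕_{i∈ℤ} M_i` a `ℤ`-graded `R`-module.  If the graded submodule
`K = (0 :_M R₊)` is tame, then `M` is tame. -/
theorem stmt9 {R₀ R M : Type u} [CommRing R₀] [CommRing R] [Algebra R₀ R]
    [IsNoetherianRing R]
    (𝒜 : ℕ → Submodule R₀ R) [GradedAlgebra 𝒜]
    -- `R₀` is (isomorphic to) the degree-zero part of `R`: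
    (hinj : Function.Injective (algebraMap R₀ R)) (h0 : 𝒜 0 = 1)
    -- `R` is homogeneous, i.e. generated in degree one over `R₀`:
    (hhom : ∀ n : ℕ, 𝒜 (n + 1) = 𝒜 1 * 𝒜 n)
    [AddCommGroup M] [Module R M] [Module R₀ M] [IsScalarTower R₀ R M]
    -- `M` is a `ℤ`-graded `R`-module:
    (ℳ : ℤ → Submodule R₀ M) [DirectSum.Decomposition ℳ]
    (hsmul : ∀ (i : ℕ) (j : ℤ) (r : R) (m : M),
      r ∈ 𝒜 i → m ∈ ℳ j → r • m ∈ ℳ ((i : ℤ) + j))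
    -- `K = (0 :_M R₊)` is tame (its components being `K ∩ M_n`):
    (htame : ∃ n₀ : ℤ,
      (∀ n ≤ n₀, ∀ x ∈ Submodule.torsionBySet R M
          ((HomogeneousIdeal.irrelevant 𝒜).toIdeal : Set R), x ∈ ℳ n → x = 0) ∨
      (∀ n ≤ n₀, ∃ x ∈ Submodule.torsionBySet R M
          ((HomogeneousIdeal.irrelevant 𝒜).toIdeal : Set R), x ∈ ℳ n ∧ x ≠ 0)) :
    -- then `M` is tame:
    ∃ n₁ : ℤ, (∀ n ≤ n₁, ℳ n = ⊥) ∨ (∀ n ≤ n₁, ℳ n ≠ ⊥) := by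
  obtain ⟨n₀, hK0 | hKne⟩ := htame
  · -- K vanishes below n₀
    by_cases hM : ∀ n ≤ n₀, ℳ n ≠ ⊥
    · exact ⟨n₀, Or.inr hM⟩
    · push_neg at hM
      obtain ⟨n, hn, hnz⟩ := hM
      -- downward induction: ℳ (n - k) = ⊥ for all k
      have key : ∀ k : ℕ, ℳ (n - k) = ⊥ := by
        intro k
        induction k with
        | zero => simpa using hnz
        | succ k ih =>
          rw [Submodule.eq_bot_iff]
          intro x hx
          -- show x is killed by the irrelevant ideal
          have hx1 : ∀ a ∈ 𝒜 1, a • x = 0 := by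
            intro a ha
            have := hsmul 1 (n - ((k + 1 : ℕ) : ℤ)) a x ha hx
            push_cast at this
            have heq : (1 : ℤ) + (n - ((k : ℤ) + 1)) = n - k := by ring
            rw [heq, ih] at this
            simpa using this
          have hspan : ∀ r ∈ Ideal.span ((𝒜 1 : Submodule R₀ R) : Set R), r • x = 0 := by
            intro r hr
            induction hr using Submodule.span_induction with
            | mem a ha => exact hx1 a ha
            | zero => simp
            | add a b _ _ ha hb => rw [add_smul, ha, hb, add_zero]
            | smul c a _ ha => rw [smul_eq_mul, mul_smul, ha, smul_zero]
          have hxK : x ∈ Submodule.torsionBySet R M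
              ((HomogeneousIdeal.irrelevant 𝒜).toIdeal : Set R) := by
            rw [Submodule.mem_torsionBySet_iff]
            intro ⟨a, ha⟩
            exact hspan a (irrelevant_le_span 𝒜 hhom ha)
          exact hK0 _ (le_trans (by omega) hn) x hxK hx
      refine ⟨n, Or.inl fun m hm => ?_⟩
      have : m = n - ((n - m).toNat : ℕ) := by omega
      rw [this]; exact key _
  · -- K nonzero below n₀, so M nonzero below n₀
    refine ⟨n₀, Or.inr fun n hn => ?_⟩
    obtain ⟨x, -, hxn, hxne⟩ := hKne n hn
    intro hbot
    exact hxne (by simpa [hbot] using hxn)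
end

section
/- Let R = ⊕_{i∈ℕ} R_i be a homogeneous Noetherian graded ring with irrelevant ideal R_+, assume the degree-zero subring (R_0, m_0) is local, and set m* = m_0R + R_+. Let M = ⊕_{i∈ℤ} M_i be a ℤ-graded R-module such that each component M_i is a finitely generated R_0-module. If M/m*M is an Artinian R-module, then M is tame: there exists n_0 such that either M_n = 0 for all n ≤ n_0 or M_n ≠ 0 for all n ≤ n_0. -/
/-!
Let `Lₙ` be the `R`-submodule generated by the components of degree `≤ n`. The images of the
`Lₙ` in the Artinian module `M/m*M` stabilize as `n → -∞`, so `Mₙ ⊆ m*M + Lₙ₋₁` for `n ≪ 0`.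
Comparing degree-`n` components gives `Mₙ ⊆ m₀Mₙ + R₁Mₙ₋₁`, hence `Mₙ₋₁ = 0` forces `Mₙ = 0`
by Nakayama. Below that point the vanishing components are therefore closed upwards, which is
tameness.
-/

theorem Submodule.exists_le_sup_sub_one_of_isArtinian_quotient {R M : Type*} [Ring R]
    [AddCommGroup M] [Module R M] (K : Submodule R M) [hK : IsArtinian R (M ⧸ K)]
    {L : ℤ → Submodule R M} (hL : Monotone L) : ∃ N : ℤ, ∀ n ≤ N, L n ≤ K ⊔ L (n - 1) := by
  obtain ⟨k, hk⟩ := WellFoundedLT.antitone_chain_condition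
    (f := fun k : ℕ ↦ (L (-k)).map K.mkQ) fun a b hab ↦ map_mono (hL (by omega))
  refine ⟨-k, fun n hn ↦ ?_⟩
  obtain ⟨m, rfl⟩ : ∃ m : ℕ, n = -m := ⟨(-n).toNat, by omega⟩
  have hstab : (L (-m)).map K.mkQ = (L (-m - 1)).map K.mkQ := by
    simpa [sub_eq_add_neg, add_comm] using (hk m (by omega)).symm.trans (hk (m + 1) (by omega))
  calc L (-m) ≤ K ⊔ L (-m) := le_sup_right
    _ = K ⊔ L (-m - 1) := by rw [← comap_map_mkQ, hstab, comap_map_mkQ]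

theorem Int.exists_forall_le_or_forall_le_not {P : ℤ → Prop} {N : ℤ}
    (h : ∀ n ≤ N, P (n - 1) → P n) : ∃ n₀, (∀ n ≤ n₀, P n) ∨ ∀ n ≤ n₀, ¬P n := by
  by_cases hP : ∀ n ≤ N, P n
  · exact ⟨N, .inl hP⟩
  push Not at hP
  obtain ⟨p, hpN, hp⟩ := hP
  exact ⟨p, .inr <| Int.leInductionDown (motive := fun n _ ↦ ¬P n) hp
    fun k hk hPk hPk' ↦ hPk (h k (by omega) hPk')⟩

variable {R₀ R M : Type*} [CommRing R₀] [CommRing R] [AddCommGroup M] [Module R₀ M] [Module R M]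

section GradedProj

variable (ℳ : ℤ → Submodule R₀ M) [DirectSum.Decomposition ℳ]

noncomputable def gradedProj (n : ℤ) : M →ₗ[R₀] M :=
  (ℳ n).subtype ∘ₗ DirectSum.component R₀ ℤ (fun i ↦ ℳ i) n ∘ₗ
    (DirectSum.decomposeLinearEquiv ℳ).toLinearMap

variable {ℳ}

lemma gradedProj_mem (n : ℤ) (x : M) : gradedProj ℳ n x ∈ ℳ n :=
  (DirectSum.decompose ℳ x n).2

lemma gradedProj_of_mem {n : ℤ} {x : M} (h : x ∈ ℳ n) : gradedProj ℳ n x = x :=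
  DirectSum.decompose_of_mem_same ℳ h

lemma gradedProj_of_mem_of_ne {m n : ℤ} {x : M} (h : x ∈ ℳ m) (hmn : m ≠ n) :
    gradedProj ℳ n x = 0 :=
  DirectSum.decompose_of_mem_ne ℳ h hmn

end GradedProj

section GradedSpan

variable (R) (ℳ : ℤ → Submodule R₀ M)

def gradedSpanLE (c : ℤ) : Submodule R M :=
  Submodule.span R (⋃ m ≤ c, (ℳ m : Set M))

theorem gradedSpanLE_mono : Monotone (gradedSpanLE R ℳ) :=
  fun _ _ h ↦ Submodule.span_mono <| Set.biUnion_subset_biUnion_left fun _ hm ↦ le_trans hm h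

variable {R ℳ}

theorem mem_gradedSpanLE_of_mem {m c : ℤ} {x : M} (hx : x ∈ ℳ m) (hmc : m ≤ c) :
    x ∈ gradedSpanLE R ℳ c :=
  Submodule.subset_span <| Set.mem_iUnion₂.mpr ⟨m, hmc, hx⟩

end GradedSpan

variable [Algebra R₀ R]

def IsGradedSMul (𝒜 : ℕ → Submodule R₀ R) (ℳ : ℤ → Submodule R₀ M) : Prop :=
  ∀ (i : ℕ) (j : ℤ) (r : R) (m : M), r ∈ 𝒜 i → m ∈ ℳ j → r • m ∈ ℳ ((i : ℤ) + j)

variable {𝒜 : ℕ → Submodule R₀ R} {ℳ : ℤ → Submodule R₀ M}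

lemma gradedProj_smul_of_mem [DirectSum.Decomposition ℳ] (hsmul : IsGradedSMul 𝒜 ℳ) {i : ℕ}
    {r : R} (hr : r ∈ 𝒜 i) (x : M) (n : ℤ) :
    gradedProj ℳ n (r • x) = r • gradedProj ℳ (n - i) x := by
  induction x using DirectSum.Decomposition.inductionOn ℳ with
  | zero => simp
  | add x y hx hy => rw [smul_add, map_add, hx, hy, map_add, smul_add]
  | @homogeneous j x =>
    obtain ⟨x, hx⟩ := x
    by_cases h : n = i + j
    · subst h
      rw [gradedProj_of_mem (hsmul i j r x hr hx), add_sub_cancel_left, gradedProj_of_mem hx]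
    · rw [gradedProj_of_mem_of_ne (hsmul i j r x hr hx) (Ne.symm h),
        gradedProj_of_mem_of_ne hx (by omega), smul_zero]

lemma smul_mem_degreeOne_smul [IsScalarTower R₀ R M] (hhom : ∀ n : ℕ, 𝒜 (n + 1) = 𝒜 1 * 𝒜 n)
    (hsmul : IsGradedSMul 𝒜 ℳ) {i : ℕ} (hi : 0 < i) {r : R} (hr : r ∈ 𝒜 i) {m : ℤ} {y : M}
    (hy : y ∈ ℳ m) : r • y ∈ 𝒜 1 • ℳ (i + m - 1) := by
  obtain ⟨k, rfl⟩ : ∃ k, i = k + 1 := ⟨i - 1, by omega⟩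
  rw [hhom k] at hr
  induction hr using Submodule.mul_induction_on' with
  | mem_mul_mem b hb c hc =>
    rw [mul_smul]
    exact Submodule.smul_mem_smul hb (by convert hsmul k m c y hc hy using 2; push_cast; ring)
  | add a₁ _ a₂ _ h₁ h₂ => rw [add_smul]; exact add_mem h₁ h₂

lemma gradedProj_smul_mem_of_mem_irrelevant [GradedAlgebra 𝒜] [IsScalarTower R₀ R M]
    [DirectSum.Decomposition ℳ] (hhom : ∀ n : ℕ, 𝒜 (n + 1) = 𝒜 1 * 𝒜 n)
    (hsmul : IsGradedSMul 𝒜 ℳ) {c : R} (hc : c ∈ (HomogeneousIdeal.irrelevant 𝒜).toIdeal)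
    (x : M) (n : ℤ) : gradedProj ℳ n (c • x) ∈ 𝒜 1 • ℳ (n - 1) := by
  classical
  rw [← DirectSum.sum_support_decompose 𝒜 c, Finset.sum_smul, map_sum]
  refine sum_mem fun i hi ↦ ?_
  have hi : 0 < i := by
    refine Nat.pos_of_ne_zero fun h ↦ DFinsupp.mem_support_iff.mp hi ?_
    subst h
    exact Subtype.ext hc
  rw [gradedProj_smul_of_mem hsmul (SetLike.coe_mem _)]
  simpa using smul_mem_degreeOne_smul hhom hsmul hi (SetLike.coe_mem _) (gradedProj_mem (n - i) x)

variable [GradedAlgebra 𝒜] [IsScalarTower R₀ R M] [DirectSum.Decomposition ℳ]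

/-- The `x` whose degree-`n` component lies in `I Mₙ + R₁ Mₙ₋₁`, the degree-`n` part of
`(IR + R₊) M`. -/
def gradedProjPreimage (h0 : 𝒜 0 = 1) (hhom : ∀ n : ℕ, 𝒜 (n + 1) = 𝒜 1 * 𝒜 n)
    (hsmul : IsGradedSMul 𝒜 ℳ) (I : Ideal R₀) (n : ℤ) : Submodule R M where
  carrier := {x | gradedProj ℳ n x ∈ I • ℳ n ⊔ 𝒜 1 • ℳ (n - 1)}
  add_mem' hx hy := by simpa only [Set.mem_ofPred_eq, map_add] using add_mem hx hy
  zero_mem' := by simp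
  smul_mem' r x hx := by
    change gradedProj ℳ n (r • x) ∈ I • ℳ n ⊔ 𝒜 1 • ℳ (n - 1)
    have hr₀ : (DirectSum.decompose 𝒜 r 0 : R) ∈ (1 : Submodule R₀ R) := h0 ▸ SetLike.coe_mem _
    obtain ⟨c, hc⟩ := Submodule.mem_one.mp hr₀
    have hirr : r - algebraMap R₀ R c ∈ (HomogeneousIdeal.irrelevant 𝒜).toIdeal := by
      change GradedRing.proj 𝒜 0 (r - algebraMap R₀ R c) = 0
      rw [map_sub, GradedRing.proj_apply, GradedRing.proj_apply,
        DirectSum.decompose_of_mem_same 𝒜 (SetLike.algebraMap_mem_graded 𝒜 c), hc, sub_self]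
    rw [← add_sub_cancel (algebraMap R₀ R c) r, add_smul, map_add, algebraMap_smul, map_smul]
    exact add_mem (Submodule.smul_mem _ c hx)
      (Submodule.mem_sup_right (gradedProj_smul_mem_of_mem_irrelevant hhom hsmul hirr x n))

theorem mem_gradedProjPreimage {h0 : 𝒜 0 = 1} {hhom : ∀ n : ℕ, 𝒜 (n + 1) = 𝒜 1 * 𝒜 n}
    {hsmul : IsGradedSMul 𝒜 ℳ} {I : Ideal R₀} {n : ℤ} {x : M} :
    x ∈ gradedProjPreimage h0 hhom hsmul I n ↔ gradedProj ℳ n x ∈ I • ℳ n ⊔ 𝒜 1 • ℳ (n - 1) :=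
  Iff.rfl

theorem smul_top_le_gradedProjPreimage (h0 : 𝒜 0 = 1) (hhom : ∀ n : ℕ, 𝒜 (n + 1) = 𝒜 1 * 𝒜 n)
    (hsmul : IsGradedSMul 𝒜 ℳ) (I : Ideal R₀) (n : ℤ) :
    (Ideal.map (algebraMap R₀ R) I + (HomogeneousIdeal.irrelevant 𝒜).toIdeal) • (⊤ : Submodule R M)
      ≤ gradedProjPreimage h0 hhom hsmul I n := by
  refine Submodule.smul_le.mpr fun a ha x _ ↦ ?_
  have hcolon : Ideal.map (algebraMap R₀ R) I ⊔ (HomogeneousIdeal.irrelevant 𝒜).toIdeal ≤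
      (gradedProjPreimage h0 hhom hsmul I n).colon Set.univ := by
    refine sup_le (Ideal.map_le_iff_le_comap.mpr fun c hc ↦ ?_) fun c hc ↦ ?_
    · refine Submodule.mem_colon.mpr fun x _ ↦ ?_
      rw [mem_gradedProjPreimage, algebraMap_smul, map_smul]
      exact Submodule.mem_sup_left (Submodule.smul_mem_smul hc (gradedProj_mem n x))
    · exact Submodule.mem_colon.mpr fun x _ ↦
        Submodule.mem_sup_right (gradedProj_smul_mem_of_mem_irrelevant hhom hsmul hc x n)
  exact Submodule.mem_colon.mp (hcolon ha) x trivial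

theorem gradedSpanLE_le_gradedProjPreimage (h0 : 𝒜 0 = 1)
    (hhom : ∀ n : ℕ, 𝒜 (n + 1) = 𝒜 1 * 𝒜 n) (hsmul : IsGradedSMul 𝒜 ℳ) (I : Ideal R₀) (n : ℤ) :
    gradedSpanLE R ℳ (n - 1) ≤ gradedProjPreimage h0 hhom hsmul I n := by
  refine Submodule.span_le.mpr fun x hx ↦ ?_
  obtain ⟨m, hm, hx⟩ := Set.mem_iUnion₂.mp hx
  rw [SetLike.mem_coe, mem_gradedProjPreimage, gradedProj_of_mem_of_ne hx (by omega)]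
  exact zero_mem _

theorem le_smul_sup_of_le_sup_gradedSpanLE (h0 : 𝒜 0 = 1)
    (hhom : ∀ n : ℕ, 𝒜 (n + 1) = 𝒜 1 * 𝒜 n) (hsmul : IsGradedSMul 𝒜 ℳ) {I : Ideal R₀} {n : ℤ}
    (h : ∀ x ∈ ℳ n, x ∈ (Ideal.map (algebraMap R₀ R) I + (HomogeneousIdeal.irrelevant 𝒜).toIdeal) •
      (⊤ : Submodule R M) ⊔ gradedSpanLE R ℳ (n - 1)) :
    ℳ n ≤ I • ℳ n ⊔ 𝒜 1 • ℳ (n - 1) := fun x hx ↦ by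
  have hx' : x ∈ gradedProjPreimage h0 hhom hsmul I n :=
    sup_le (smul_top_le_gradedProjPreimage h0 hhom hsmul I n)
      (gradedSpanLE_le_gradedProjPreimage h0 hhom hsmul I n) (h x hx)
  rwa [mem_gradedProjPreimage, gradedProj_of_mem hx] at hx'

theorem stmt10_general {R₀ R M : Type u} [CommRing R₀] [IsLocalRing R₀] [CommRing R] [Algebra R₀ R]
    (𝒜 : ℕ → Submodule R₀ R) [GradedAlgebra 𝒜]
    -- `R₀` is (isomorphic to) the degree-zero part of `R`:
    (h0 : 𝒜 0 = 1)
    -- `R` is homogeneous, i.e. generated in degree one over `R₀`: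
    (hhom : ∀ n : ℕ, 𝒜 (n + 1) = 𝒜 1 * 𝒜 n)
    [AddCommGroup M] [Module R M] [Module R₀ M] [IsScalarTower R₀ R M]
    -- `M` is a `ℤ`-graded `R`-module:
    (ℳ : ℤ → Submodule R₀ M) [DirectSum.Decomposition ℳ]
    (hsmul : ∀ (i : ℕ) (j : ℤ) (r : R) (m : M),
      r ∈ 𝒜 i → m ∈ ℳ j → r • m ∈ ℳ ((i : ℤ) + j))
    -- each component `M_i` is a finitely generated `R₀`-module:
    (hfg : ∀ i : ℤ, (ℳ i).FG)
    -- `M/m*M` is Artinian, where `m* = m₀R + R₊`: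
    (hart : IsArtinian R
      (M ⧸ ((Ideal.map (algebraMap R₀ R) (IsLocalRing.maximalIdeal R₀) +
        (HomogeneousIdeal.irrelevant 𝒜).toIdeal) • (⊤ : Submodule R M)))) :
    -- then `M` is tame:
    ∃ n₀ : ℤ, (∀ n ≤ n₀, ℳ n = ⊥) ∨ (∀ n ≤ n₀, ℳ n ≠ ⊥) := by
  obtain ⟨N, hN⟩ := Submodule.exists_le_sup_sub_one_of_isArtinian_quotient _
    (hK := hart) (gradedSpanLE_mono R ℳ)
  have hcomponent (n : ℤ) (hn : n ≤ N) :
      ℳ n ≤ IsLocalRing.maximalIdeal R₀ • ℳ n ⊔ 𝒜 1 • ℳ (n - 1) :=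
    le_smul_sup_of_le_sup_gradedSpanLE h0 hhom hsmul fun x hx ↦
      hN n hn (mem_gradedSpanLE_of_mem hx le_rfl)
  refine Int.exists_forall_le_or_forall_le_not (N := N) fun n hn hbot ↦ ?_
  refine Submodule.eq_bot_of_le_smul_of_le_jacobson_bot _ _ (hfg n) ?_
    (IsLocalRing.maximalIdeal_le_jacobson ⊥)
  simpa [hbot] using hcomponent n hn

/-- **Lemma 4.2(ii).** Let `R = ⊕_{i∈ℕ} R_i` be a homogeneous Noetherian graded ring with
irrelevant ideal `R₊`, where `(R₀, m₀)` is local, and set `m* = m₀R + R₊`.  Let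
`M = ⊕_{i∈ℤ} M_i` be a `ℤ`-graded `R`-module each of whose components is a finitely generated
`R₀`-module.  If `M/m*M` is Artinian, then `M` is tame. -/
theorem stmt10 {R₀ R M : Type u} [CommRing R₀] [IsLocalRing R₀] [CommRing R] [Algebra R₀ R]
    [IsNoetherianRing R]
    (𝒜 : ℕ → Submodule R₀ R) [GradedAlgebra 𝒜]
    -- `R₀` is (isomorphic to) the degree-zero part of `R`:
    (hinj : Function.Injective (algebraMap R₀ R)) (h0 : 𝒜 0 = 1)
    -- `R` is homogeneous, i.e. generated in degree one over `R₀`: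
    (hhom : ∀ n : ℕ, 𝒜 (n + 1) = 𝒜 1 * 𝒜 n)
    [AddCommGroup M] [Module R M] [Module R₀ M] [IsScalarTower R₀ R M]
    -- `M` is a `ℤ`-graded `R`-module:
    (ℳ : ℤ → Submodule R₀ M) [DirectSum.Decomposition ℳ]
    (hsmul : ∀ (i : ℕ) (j : ℤ) (r : R) (m : M),
      r ∈ 𝒜 i → m ∈ ℳ j → r • m ∈ ℳ ((i : ℤ) + j))
    -- each component `M_i` is a finitely generated `R₀`-module:
    (hfg : ∀ i : ℤ, (ℳ i).FG)
    -- `M/m*M` is Artinian, where `m* = m₀R + R₊`: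
    (hart : IsArtinian R
      (M ⧸ ((Ideal.map (algebraMap R₀ R) (IsLocalRing.maximalIdeal R₀) +
        (HomogeneousIdeal.irrelevant 𝒜).toIdeal) • (⊤ : Submodule R M)))) :
    -- then `M` is tame:
    ∃ n₀ : ℤ, (∀ n ≤ n₀, ℳ n = ⊥) ∨ (∀ n ≤ n₀, ℳ n ≠ ⊥) :=
  stmt10_general 𝒜 h0 hhom ℳ hsmul hfg hart
end

section
/- Let R be a commutative ring graded by ℕ (or ℤ) and let M be a graded R-module. If p is an attached prime of M, then p*, the homogeneous ideal generated by all homogeneous elements of p (equivalently, the largest homogeneous ideal contained in p), is also an attached prime of M. -/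
set_option synthInstance.maxHeartbeats 400000
set_option maxHeartbeats 1000000

universe u

/-- A prime ideal `p` of `S` is an *attached prime* of the `S`-module `K` if there is a
submodule `L` of `K` with `p = (L :_S K)`. -/
def IsAttachedPrime (S : Type u) [CommRing S] (K : Type u) [AddCommGroup K] [Module S K]
    (p : Ideal S) : Prop :=
  p.IsPrime ∧ ∃ L : Submodule S K, p = L.colon ⊤

open DirectSum

section Aux

variable {R M : Type u} [CommRing R]
    (𝒜 : ℕ → AddSubgroup R) [GradedRing 𝒜]
    [AddCommGroup M] [Module R M]
    (ℳ : ℤ → AddSubgroup M) [DirectSum.Decomposition ℳ]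
    (hsmul : ∀ (i : ℕ) (j : ℤ) (r : R) (m : M),
      r ∈ 𝒜 i → m ∈ ℳ j → r • m ∈ ℳ ((i : ℤ) + j))

include hsmul

/-- Lemma A: decomposition of `r • m` for homogeneous `r`. -/
theorem decompose_homog_smul {i : ℕ} {r : R} (hr : r ∈ 𝒜 i) (m : M) (k : ℤ) :
    (decompose ℳ (r • m) k : M) = r • (decompose ℳ m (k - (i : ℤ)) : M) := by
  induction m using DirectSum.Decomposition.inductionOn ℳ with
  | zero => simp
  | @homogeneous j m =>
    obtain ⟨m, hm⟩ := m
    have hrm : r • m ∈ ℳ ((i : ℤ) + j) := hsmul i j r m hr hm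
    by_cases hk : k = (i : ℤ) + j
    · subst hk
      rw [decompose_of_mem_same ℳ hrm]
      rw [show (i : ℤ) + j - (i : ℤ) = j by ring, decompose_of_mem_same ℳ hm]
    · rw [decompose_of_mem_ne ℳ hrm (Ne.symm hk), decompose_of_mem_ne ℳ hm
        (by intro h; apply hk; omega), smul_zero]
  | add m m' hmi hmi' =>
    rw [smul_add, DirectSum.decompose_add, DirectSum.decompose_add, DirectSum.add_apply,
      AddSubgroup.coe_add, hmi, hmi', DirectSum.add_apply, AddSubgroup.coe_add, smul_add]

/-- Lemma B: decomposition of `r • m` for homogeneous `m`. -/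
theorem decompose_smul_homog {j : ℤ} {m : M} (hm : m ∈ ℳ j) (r : R) (i : ℕ) :
    (decompose ℳ (r • m) ((i : ℤ) + j) : M) = (decompose 𝒜 r i : R) • m := by
  induction r using DirectSum.Decomposition.inductionOn 𝒜 with
  | zero => simp
  | @homogeneous i' r =>
    obtain ⟨r, hr⟩ := r
    have hrm : r • m ∈ ℳ ((i' : ℤ) + j) := hsmul i' j r m hr hm
    by_cases hi : i = i'
    · subst hi
      rw [decompose_of_mem_same ℳ hrm, decompose_of_mem_same 𝒜 hr]
    · rw [decompose_of_mem_ne ℳ hrm (by intro h; apply hi; omega),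
        decompose_of_mem_ne 𝒜 hr (Ne.symm hi), zero_smul]
  | add r r' hri hri' =>
    rw [add_smul, DirectSum.decompose_add, DirectSum.add_apply, AddSubgroup.coe_add,
      hri, hri', DirectSum.decompose_add, DirectSum.add_apply, AddSubgroup.coe_add, add_smul]

/-- The span of a set of homogeneous elements is a graded submodule. -/
theorem decompose_mem_span {s : Set M} (hs : ∀ x ∈ s, SetLike.IsHomogeneousElem ℳ x)
    {m : M} (hm : m ∈ Submodule.span R s) (k : ℤ) :
    (decompose ℳ m k : M) ∈ Submodule.span R s := by
  induction hm using Submodule.span_induction generalizing k with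
  | mem x hx =>
    obtain ⟨j, hj⟩ := hs x hx
    by_cases hk : k = j
    · subst hk; rw [decompose_of_mem_same ℳ hj]; exact Submodule.subset_span hx
    · rw [decompose_of_mem_ne ℳ hj (Ne.symm hk)]; exact Submodule.zero_mem _
  | zero => simp
  | add x y _ _ hx hy =>
    rw [DirectSum.decompose_add, DirectSum.add_apply, AddSubgroup.coe_add]
    exact Submodule.add_mem _ (hx k) (hy k)
  | smul r x _ hx =>
    induction r using DirectSum.Decomposition.inductionOn 𝒜 generalizing k with
    | zero => simp
    | @homogeneous i r =>
      obtain ⟨r, hr⟩ := r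
      rw [decompose_homog_smul 𝒜 ℳ hsmul hr x k]
      exact Submodule.smul_mem _ _ (hx _)
    | add r r' hri hri' =>
      rw [add_smul, DirectSum.decompose_add, DirectSum.add_apply, AddSubgroup.coe_add]
      exact Submodule.add_mem _ (hri k) (hri' k)

end Aux

/-- If `p` is an attached prime of a graded module `M` over a graded commutative ring `R`,
then `p*`, the ideal generated by the homogeneous elements of `p`, is also an attached prime
of `M`. -/
theorem stmt14 {R M : Type u} [CommRing R]
    (𝒜 : ℕ → AddSubgroup R) [GradedRing 𝒜]
    [AddCommGroup M] [Module R M]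
    -- `M` is a `ℤ`-graded `R`-module:
    (ℳ : ℤ → AddSubgroup M) [DirectSum.Decomposition ℳ]
    (hsmul : ∀ (i : ℕ) (j : ℤ) (r : R) (m : M),
      r ∈ 𝒜 i → m ∈ ℳ j → r • m ∈ ℳ ((i : ℤ) + j))
    (p : Ideal R) (hp : IsAttachedPrime R M p) :
    IsAttachedPrime R M (Ideal.span {r : R | r ∈ p ∧ SetLike.IsHomogeneousElem 𝒜 r}) := by
  classical
  obtain ⟨hprime, L, hL⟩ := hp
  have hspan : Ideal.span {r : R | r ∈ p ∧ SetLike.IsHomogeneousElem 𝒜 r}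
      = (p.homogeneousCore 𝒜).toIdeal := by
    unfold Ideal.homogeneousCore Ideal.homogeneousCore'
    congr 1
    ext x
    constructor
    · rintro ⟨hxp, hx⟩
      exact ⟨⟨x, hx⟩, hxp, rfl⟩
    · rintro ⟨⟨y, hy⟩, hyp, rfl⟩
      exact ⟨hyp, hy⟩
  constructor
  · rw [hspan]
    exact hprime.homogeneousCore (𝒜 := 𝒜)
  · -- the submodule: span of homogeneous elements of `L`
    set s : Set M := {m : M | m ∈ L ∧ SetLike.IsHomogeneousElem ℳ m} with hs
    set N : Submodule R M := Submodule.span R s with hN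
    have hshomog : ∀ x ∈ s, SetLike.IsHomogeneousElem ℳ x := fun x hx => hx.2
    have hNL : N ≤ L := Submodule.span_le.mpr (fun x hx => hx.1)
    refine ⟨N, le_antisymm ?_ ?_⟩
    · -- span ⊆ N.colon ⊤
      rw [Ideal.span_le]
      rintro r ⟨hrp, i, hri⟩
      rw [SetLike.mem_coe, Submodule.mem_colon]
      intro m _
      -- write m as a sum of homogeneous components
      rw [← DirectSum.sum_support_decompose ℳ m, Finset.smul_sum]
      refine Submodule.sum_mem _ fun j _ => ?_
      refine Submodule.subset_span ⟨?_, (i : ℤ) + j, hsmul i j r _ hri (SetLike.coe_mem _)⟩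
      have : r ∈ L.colon ⊤ := hL ▸ hrp
      exact Submodule.mem_colon.mp this _ trivial
    · -- N.colon ⊤ ⊆ span
      intro r hr
      rw [← DirectSum.sum_support_decompose 𝒜 r]
      refine Ideal.sum_mem _ fun i _ => ?_
      refine Ideal.subset_span ⟨?_, i, SetLike.coe_mem _⟩
      -- show (decompose 𝒜 r i : R) ∈ p = L.colon ⊤
      rw [hL, Submodule.mem_colon]
      intro m _
      have key : ∀ (j : ℤ) (m' : M), m' ∈ ℳ j → (decompose 𝒜 r i : R) • m' ∈ N := by
        intro j m' hm'
        rw [← decompose_smul_homog 𝒜 ℳ hsmul hm' r i]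
        have hrm' : r • m' ∈ N := Submodule.mem_colon.mp hr m' trivial
        exact decompose_mem_span 𝒜 ℳ hsmul hshomog hrm' _
      have hNL' : (decompose 𝒜 r i : R) • m ∈ N := by
        rw [← DirectSum.sum_support_decompose ℳ m, Finset.smul_sum]
        exact Submodule.sum_mem _ fun j _ => key j _ (SetLike.coe_mem _)
      exact hNL hNL'
end
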